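/- arXiv:cs/9809017 — 4 statements merged into one kernel-verified Lean document; each statement's English description precedes it below -/
import Mathlib

section
/- Let f_c(a, b, a1, a2, b1, b2, α, β, γ, δ) be the conjunction of the clauses (¬a2∨¬b2∨α), (a2∨¬α), (b2∨¬α), (¬a2∨b1∨β), (a2∨¬β), (¬b1∨¬β), (a1∨b1∨γ), (¬a1∨¬γ), (¬b1∨¬γ), (a1∨¬b2∨δ), (¬a1∨¬δ), (b2∨¬δ), (α∨β∨γ∨δ), (¬α∨¬β), (¬β∨¬γ), (¬γ∨¬δ), (¬δ∨¬α), (a2∨¬a), (a∨¬a2), (b2∨¬b), (b∨¬b2). Then every satisfying assignment of f_c satisfies a1 = a and b1 = b. -/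
def fc (a b a1 a2 b1 b2 α β γ δ : Bool) : Prop :=
  ((!a2 || !b2 || α) && (a2 || !α) && (b2 || !α) &&
   (!a2 || b1 || β) && (a2 || !β) && (!b1 || !β) &&
   (a1 || b1 || γ) && (!a1 || !γ) && (!b1 || !γ) &&
   (a1 || !b2 || δ) && (!a1 || !δ) && (b2 || !δ) &&
   (α || β || γ || δ) &&
   (!α || !β) && (!β || !γ) && (!γ || !δ) && (!δ || !α) &&
   (a2 || !a) && (a || !a2) && (b2 || !b) && (b || !b2)) = true

theorem stmt_2 (a b a1 a2 b1 b2 α β γ δ : Bool)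
    (h : fc a b a1 a2 b1 b2 α β γ δ) : a1 = a ∧ b1 = b := by
  revert a b a1 a2 b1 b2 α β γ δ h
  unfold fc
  decide
end

section
/- In any assignment satisfying both the crossover formula f_c (the 21 clauses of the planar crossover box) and the clauses (α∨δ∨ξ) ∧ (¬ξ∨β∨γ), the value of ξ is uniquely determined: ξ is false whenever α∨δ is true and ξ is true whenever β∨γ is true. Consequently every satisfying assignment of f_c extends in exactly one way to a satisfying assignment of f_c' = f_c with clause (α∨β∨γ∨δ) replaced by (α∨δ∨ξ) ∧ (¬ξ∨β∨γ). -/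
def xiClauses (α β γ δ ξ : Bool) : Prop :=
  ((α || δ || ξ) && (!ξ || β || γ)) = true

theorem stmt_5 :
    (∀ a b a1 a2 b1 b2 α β γ δ ξ : Bool,
      fc a b a1 a2 b1 b2 α β γ δ → xiClauses α β γ δ ξ →
        ((α || δ) = true → ξ = false) ∧ ((β || γ) = true → ξ = true)) ∧
    (∀ a b a1 a2 b1 b2 α β γ δ : Bool,
      fc a b a1 a2 b1 b2 α β γ δ → ∃! ξ : Bool, xiClauses α β γ δ ξ) := by
  constructor
  · unfold fc xiClauses; decide
  · intro a b a1 a2 b1 b2 α β γ δ hf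
    unfold fc at hf
    refine ⟨β || γ, ?_, ?_⟩
    · unfold xiClauses; revert hf; revert a b a1 a2 b1 b2 α β γ δ; decide
    · intro y hy; unfold xiClauses at hy; revert hf hy
      revert a b a1 a2 b1 b2 α β γ δ y; decide
end

section
/- Let c' be the conjunction of clauses (z_p∨u∨v), (¬z_q∨u∨w), (v∨w∨t), (¬z_r∨v∨x) over Boolean variables z_p, z_q, z_r, u, v, w, t, x. Then for each assignment of (z_p, z_q, z_r) with at least one of z_p, z_q, z_r true, there is exactly one extension to u, v, w, t, x under which every clause of c' has exactly one true literal. -/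
def exactlyOne (a b c : Bool) : Prop :=
  (a = true ∧ b = false ∧ c = false) ∨ (a = false ∧ b = true ∧ c = false) ∨
  (a = false ∧ b = false ∧ c = true)

set_option maxHeartbeats 2000000 in
set_option synthInstance.maxHeartbeats 1000000 in
set_option synthInstance.maxSize 2000 in
theorem stmt_10 (zp zq zr : Bool) (h : (zp || zq || zr) = true) :
    ∃! s : Bool × Bool × Bool × Bool × Bool,
      exactlyOne zp s.1 s.2.1 ∧ exactlyOne (!zq) s.1 s.2.2.1 ∧
      exactlyOne s.2.1 s.2.2.1 s.2.2.2.1 ∧ exactlyOne (!zr) s.2.1 s.2.2.2.2 := by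
  simp only [exactlyOne, ExistsUnique]
  revert h; revert zp zq zr; decide
end

section
/- For Boolean variables z_p, y (representing the replacement of a negated literal ¬z_p by variable y in the 1-Ex3MonoSat reduction) and auxiliary variables a, d, e, f: the conjunction of clauses (z_p∨y∨a), (a∨d∨e), (a∨f∨e), (d∨f∨e), each required to have exactly one true literal, has solutions exactly when y = ¬z_p; and for each value of z_p there is exactly one assignment to y, a, d, e, f making every clause have exactly one true literal, namely y = ¬z_p, a = false, d = false, f = false, e = true. -/
theorem stmt_19 :
    (∀ zp y a d e f : Bool,
      (exactlyOne zp y a ∧ exactlyOne a d e ∧ exactlyOne a f e ∧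
        exactlyOne d f e) ↔
      (y = !zp ∧ a = false ∧ d = false ∧ f = false ∧ e = true)) ∧
    (∀ zp : Bool, ∃! s : Bool × Bool × Bool × Bool × Bool,
      exactlyOne zp s.1 s.2.1 ∧ exactlyOne s.2.1 s.2.2.1 s.2.2.2.1 ∧
      exactlyOne s.2.1 s.2.2.2.2 s.2.2.2.1 ∧
      exactlyOne s.2.2.1 s.2.2.2.2 s.2.2.2.1) := by
  unfold exactlyOne
  constructor
  · intro zp y a d e f
    cases zp <;> cases y <;> cases a <;> cases d <;> cases e <;> cases f <;> simp
  · intro zp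
    cases zp
    · refine ⟨(true, false, false, true, false), by simp, ?_⟩
      rintro ⟨y, a, d, e, f⟩ h
      revert h
      cases y <;> cases a <;> cases d <;> cases e <;> cases f <;> simp
    · refine ⟨(false, false, false, true, false), by simp, ?_⟩
      rintro ⟨y, a, d, e, f⟩ h
      revert h
      cases y <;> cases a <;> cases d <;> cases e <;> cases f <;> simp
end
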